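/- Let G=(V,E_L,E_R) be an achievement positional game and let u∈V with {u}∉E_L. If Left has a winning (resp. non-losing) strategy as second player on G, then Left has a winning (resp. non-losing) strategy as second player on the updated game G_u. -/

import Mathlib

/-!
Left steals her strategy `σ` for `G`. Alongside the real play of `G_u` she keeps a shadow
play of `G` in which Right's moves are copied and her own moves are those of `σ`; in the
real game she plays σ's move when it is available, and otherwise (σ's move is `u` or a
vertex she already holds) an arbitrary fresh vertex. Throughout, Right holds the same
vertices in both plays and Left's shadow vertices lie among her real ones together with
`u`. Since Left's edges of `G_u` are those of `G` with `u` removed and Right's edges of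
`G_u` are those of `G` avoiding `u`, every edge Left fills in the shadow is filled in the
real game, and every edge Right fills in the real game is filled in the shadow.
-/

namespace APG

/-- The two players: Left and Right. -/
inductive Player : Type
  | L : Player
  | R : Player
deriving DecidableEq, Repr

/-- The opponent of a player. -/
def Player.other : Player → Player
  | .L => .R
  | .R => .L

/-- An achievement positional game: a finite vertex set together with the set of
blue edges (Left's winning sets) and the set of red edges (Right's winning sets). -/
structure Game : Type where
  V : Finset ℕ
  EL : Finset (Finset ℕ)
  ER : Finset (Finset ℕ)

/-- The edges are nonempty subsets of the vertex set. -/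
def WellFormed (G : Game) : Prop :=
  (∀ e ∈ G.EL, e ⊆ G.V ∧ e.Nonempty) ∧ (∀ e ∈ G.ER, e ⊆ G.V ∧ e.Nonempty)

/-- The winning sets of a given player. -/
def Game.edges (G : Game) : Player → Finset (Finset ℕ)
  | .L => G.EL
  | .R => G.ER

/-- The player who makes the `i`-th move (0-indexed) when `s` moves first. -/
def mover (s : Player) (i : ℕ) : Player := if i % 2 = 0 then s else s.other

/-- The set of vertices picked by player `p` along the history `h`
(the chronological list of the moves played so far), when `s` moved first. -/
def picked (s p : Player) (h : List ℕ) : Finset ℕ :=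
  ((Finset.range h.length).filter fun i => mover s i = p).image fun i => h.getD i 0

/-- The set `S` of picked vertices fills some edge of `E`. -/
def fills (E : Finset (Finset ℕ)) (S : Finset ℕ) : Prop := ∃ e ∈ E, e ⊆ S

/-- The game is over: some player has picked all the vertices of one of their edges. -/
def ended (G : Game) (s : Player) (h : List ℕ) : Prop :=
  fills G.EL (picked s .L h) ∨ fills G.ER (picked s .R h)

/-- `h` is a legal history: no vertex is picked twice, every picked vertex belongs to
the board, and no move is made after the game has ended. -/
def ValidHist (G : Game) (s : Player) (h : List ℕ) : Prop :=
  h.Nodup ∧ (∀ x ∈ h, x ∈ G.V) ∧ ∀ k, k < h.length → ¬ ended G s (h.take k)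

/-- A strategy: a map assigning to each position (history) a vertex to pick. -/
abbrev Strategy := List ℕ → ℕ

/-- Along `h`, every move of player `p` agrees with the strategy `σ`. -/
def Follows (s p : Player) (σ : Strategy) (h : List ℕ) : Prop :=
  ∀ k, k < h.length → mover s k = p → h.getD k 0 = σ (h.take k)

/-- A finished play: either the game has ended or all vertices have been picked. -/
def Complete (G : Game) (s : Player) (h : List ℕ) : Prop :=
  ended G s h ∨ h.length = G.V.card

/-- The strategy `σ` of player `p` always suggests a legal move (an unpicked vertex)
whenever the game is not over and it is `p`'s turn. -/
def Legal (G : Game) (s p : Player) (σ : Strategy) : Prop :=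
  ∀ h, ValidHist G s h → Follows s p σ h → ¬ ended G s h → h.length < G.V.card →
    mover s h.length = p → σ h ∈ G.V ∧ σ h ∉ h

/-- Player `p` has a winning strategy on `G` when `s` moves first: following it,
every finished play ends with `p` having filled one of their edges (and, the game
having ended right there, the opponent has not filled an edge first). -/
def WinsAs (G : Game) (s p : Player) : Prop :=
  ∃ σ : Strategy, Legal G s p σ ∧
    ∀ h, ValidHist G s h → Follows s p σ h → Complete G s h →
      fills (G.edges p) (picked s p h)

/-- Player `p` has a non-losing strategy on `G` when `s` moves first: following it,
the opponent never fills one of their edges. -/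
def NonLosingAs (G : Game) (s p : Player) : Prop :=
  ∃ σ : Strategy, Legal G s p σ ∧
    ∀ h, ValidHist G s h → Follows s p σ h → Complete G s h →
      ¬ fills (G.edges p.other) (picked s p.other h)

/-- The possible results of the game, for a fixed starting player. -/
inductive Result : Type
  | Lwin : Result
  | draw : Result
  | Rwin : Result
deriving DecidableEq, Repr

/-- The result of `G` with optimal play, when `s` moves first, is `r`:
a win for a player means that player has a winning strategy, a draw means
both players have non-losing strategies. -/
def resultIs (G : Game) (s : Player) : Result → Prop
  | .Lwin => WinsAs G s .L
  | .Rwin => WinsAs G s .R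
  | .draw => NonLosingAs G s .L ∧ NonLosingAs G s .R

/-- An outcome: the pair of results with optimal play
(when Left starts, when Right starts). -/
abbrev Outcome := Result × Result

/-- `G` has outcome `o`. -/
def hasOutcome (G : Game) (o : Outcome) : Prop :=
  resultIs G .L o.1 ∧ resultIs G .R o.2

/-- Numerical value of a result, from Left's point of view:
Right wins < draw < Left wins. -/
def Result.val : Result → ℕ
  | .Rwin => 0
  | .draw => 1
  | .Lwin => 2

/-- The partial order `≤_L` on outcomes, comparing both components simultaneously
from Left's point of view. -/
def outLE (o o' : Outcome) : Prop := o.1.val ≤ o'.1.val ∧ o.2.val ≤ o'.2.val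

def oL : Outcome := (.Lwin, .Lwin)
def oLminus : Outcome := (.Lwin, .draw)
def oN : Outcome := (.Lwin, .Rwin)
def oD : Outcome := (.draw, .draw)
def oRminus : Outcome := (.draw, .Rwin)
def oR : Outcome := (.Rwin, .Rwin)

/-- The updated game `G_u` after Left has picked `u`. -/
def subL (G : Game) (u : ℕ) : Game where
  V := G.V.erase u
  EL := G.EL.image fun e => e.erase u
  ER := G.ER.filter fun e => u ∉ e

/-- The updated game `G^u` after Right has picked `u`. -/
def subR (G : Game) (u : ℕ) : Game where
  V := G.V.erase u
  EL := G.EL.filter fun e => u ∉ e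
  ER := G.ER.image fun e => e.erase u

/-- The updated game `G_u^v` after Left has picked `u` and Right has picked `v`. -/
def updLR (G : Game) (u v : ℕ) : Game where
  V := (G.V.erase u).erase v
  EL := (G.EL.filter fun e => v ∉ e).image fun e => e.erase u
  ER := (G.ER.filter fun e => u ∉ e).image fun e => e.erase v

/-- The disjoint union of two games. -/
def gunion (G G' : Game) : Game where
  V := G.V ∪ G'.V
  EL := G.EL ∪ G'.EL
  ER := G.ER ∪ G'.ER

section

variable {G : Game} {s p : Player} {σ : Strategy} {h : List ℕ} {a u : ℕ}
  {S T : Finset ℕ}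

theorem mem_picked {x : ℕ} :
    x ∈ picked s p h ↔ ∃ i, i < h.length ∧ mover s i = p ∧ h.getD i 0 = x := by
  simp [picked, and_assoc]

theorem picked_subset_toFinset : picked s p h ⊆ h.toFinset := by
  intro x hx
  obtain ⟨i, hi, -, rfl⟩ := mem_picked.1 hx
  rw [List.getD_eq_getElem _ _ hi]
  exact List.mem_toFinset.2 (List.getElem_mem hi)

theorem picked_L_union_picked_R (s : Player) (h : List ℕ) :
    picked s .L h ∪ picked s .R h = h.toFinset := by
  refine subset_antisymm (Finset.union_subset picked_subset_toFinset picked_subset_toFinset) ?_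
  intro x hx
  obtain ⟨i, hi, rfl⟩ := List.mem_iff_getElem.1 (List.mem_toFinset.1 hx)
  rw [Finset.mem_union, mem_picked, mem_picked]
  cases hm : mover s i
  · exact Or.inl ⟨i, hi, hm, List.getD_eq_getElem _ _ hi⟩
  · exact Or.inr ⟨i, hi, hm, List.getD_eq_getElem _ _ hi⟩

theorem picked_append_singleton :
    picked s p (h ++ [a]) =
      if mover s h.length = p then insert a (picked s p h) else picked s p h := by
  ext x
  have hlast : (h ++ [a]).getD h.length 0 = a := by simp
  have hprefix : (∃ i < h.length, mover s i = p ∧ (h ++ [a]).getD i 0 = x) ↔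
      x ∈ picked s p h := by
    rw [mem_picked]
    exact exists_congr fun i => and_congr_right fun hi => by rw [List.getD_append _ _ _ _ hi]
  rw [mem_picked]
  simp only [List.length_append, List.length_singleton, Nat.lt_succ_iff_lt_or_eq, or_and_right,
    exists_or, exists_eq_left, hlast, hprefix]
  split_ifs with hm
  · simp only [hm, true_and, Finset.mem_insert, eq_comm (a := x), or_comm]
  · simp only [hm, false_and, or_false]

theorem picked_append_singleton_subset : picked s p (h ++ [a]) ⊆ insert a (picked s p h) := by
  rw [picked_append_singleton]
  split_ifs
  exacts [subset_rfl, Finset.subset_insert _ _]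

theorem validHist_append_singleton_iff :
    ValidHist G s (h ++ [a]) ↔ ValidHist G s h ∧ ¬ ended G s h ∧ a ∉ h ∧ a ∈ G.V := by
  simp +contextual only [ValidHist, List.nodup_append, List.length_append,
    List.length_singleton, Nat.lt_succ_iff_lt_or_eq, or_imp, forall_and, forall_eq,
    List.take_append_of_le_length, Nat.le_of_lt, le_rfl, List.take_length, List.mem_append,
    List.mem_singleton, List.nodup_singleton, List.forall_mem_ne', true_and]
  tauto

theorem follows_append_singleton_iff :
    Follows s p σ (h ++ [a]) ↔ Follows s p σ h ∧ (mover s h.length = p → a = σ h) := by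
  simp +contextual only [Follows, List.length_append, List.length_singleton,
    Nat.lt_succ_iff_lt_or_eq, or_imp, forall_and, forall_eq, List.take_append_of_le_length,
    Nat.le_of_lt, le_rfl, List.take_length, List.getD_append, List.getD_append_right,
    Nat.sub_self, List.getD_cons_zero]

theorem ValidHist.length_le (hv : ValidHist G s h) : h.length ≤ G.V.card := by
  rw [← List.toFinset_card_of_nodup hv.1]
  exact Finset.card_le_card fun x hx => hv.2.1 x (List.mem_toFinset.1 hx)

theorem ValidHist.toFinset_eq_of_length_eq (hv : ValidHist G s h) (hfull : h.length = G.V.card) :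
    h.toFinset = G.V :=
  Finset.eq_of_subset_of_card_le (fun x hx => hv.2.1 x (List.mem_toFinset.1 hx))
    (by rw [List.toFinset_card_of_nodup hv.1, hfull])

def freshVertex (W : Finset ℕ) (h : List ℕ) : ℕ :=
  if hne : (W \ h.toFinset).Nonempty then (W \ h.toFinset).min' hne else 0

theorem freshVertex_mem {W : Finset ℕ} (hlen : h.length < W.card) :
    freshVertex W h ∈ W ∧ freshVertex W h ∉ h := by
  have hne : (W \ h.toFinset).Nonempty := by
    rw [← Finset.card_pos]
    have := Finset.le_card_sdiff h.toFinset W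
    have := List.toFinset_card_le h
    omega
  have hmem := Finset.min'_mem _ hne
  rw [Finset.mem_sdiff, List.mem_toFinset] at hmem
  simpa only [freshVertex, dif_pos hne] using hmem

theorem Legal.exists_append_singleton (hσ : Legal G s p σ) (hv : ValidHist G s h)
    (hf : Follows s p σ h) (hne : ¬ ended G s h) (hlen : h.length < G.V.card) :
    ∃ x ∈ G.V, x ∉ h ∧ ValidHist G s (h ++ [x]) ∧ Follows s p σ (h ++ [x]) := by
  by_cases hm : mover s h.length = p
  · obtain ⟨hxV, hxh⟩ := hσ h hv hf hne hlen hm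
    exact ⟨σ h, hxV, hxh, validHist_append_singleton_iff.2 ⟨hv, hne, hxh, hxV⟩,
      follows_append_singleton_iff.2 ⟨hf, fun _ => rfl⟩⟩
  · obtain ⟨hxV, hxh⟩ := freshVertex_mem hlen
    exact ⟨freshVertex G.V h, hxV, hxh, validHist_append_singleton_iff.2 ⟨hv, hne, hxh, hxV⟩,
      follows_append_singleton_iff.2 ⟨hf, fun h => absurd h hm⟩⟩

theorem fills_subL_EL (hS : fills G.EL S) (hST : S ⊆ insert u T) : fills (subL G u).EL T := by
  obtain ⟨e, he, heS⟩ := hS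
  refine ⟨e.erase u, Finset.mem_image_of_mem _ he, fun x hx => ?_⟩
  obtain ⟨hxu, hxe⟩ := Finset.mem_erase.1 hx
  exact (Finset.mem_insert.1 (hST (heS hxe))).resolve_left hxu

theorem fills_subL_ER (hS : fills G.ER S) (hu : u ∉ S) : fills (subL G u).ER S := by
  obtain ⟨e, he, heS⟩ := hS
  exact ⟨e, Finset.mem_filter.2 ⟨he, fun hue => hu (heS hue)⟩, heS⟩

theorem fills_of_fills_subL_ER (hS : fills (subL G u).ER S) : fills G.ER S := by
  obtain ⟨e, he, heS⟩ := hS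
  exact ⟨e, (Finset.mem_filter.1 he).1, heS⟩

def shadowStep (s : Player) (σ : Strategy) (H : List ℕ) (a : ℕ) : List ℕ :=
  H ++ [if mover s H.length = .L then σ H else a]

def shadow (s : Player) (σ : Strategy) (h : List ℕ) : List ℕ :=
  h.foldl (shadowStep s σ) []

theorem shadow_append_singleton :
    shadow s σ (h ++ [a]) = shadowStep s σ (shadow s σ h) a := by
  simp [shadow]

theorem length_shadow : (shadow s σ h).length = h.length := by
  induction h using List.reverseRecOn with
  | nil => rfl
  | append_singleton h a ih => simp [shadow_append_singleton, shadowStep, ih]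

def shadowStrategy (s : Player) (σ : Strategy) (W : Finset ℕ) : Strategy := fun h =>
  if σ (shadow s σ h) ∈ W ∧ σ (shadow s σ h) ∉ h then σ (shadow s σ h)
  else freshVertex W h

theorem legal_shadowStrategy (G : Game) (s p : Player) (σ : Strategy) :
    Legal G s p (shadowStrategy s σ G.V) := by
  intro h _ _ _ hlen _
  unfold shadowStrategy
  split_ifs with hx
  exacts [hx, freshVertex_mem hlen]

structure IsShadow (G : Game) (s : Player) (u : ℕ) (σ : Strategy) (h H : List ℕ) : Prop where
  length_eq : H.length = h.length
  valid : ValidHist G s H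
  follows : Follows s .L σ H
  picked_R : picked s .R H = picked s .R h
  picked_L : picked s .L H ⊆ insert u (picked s .L h)

namespace IsShadow

variable {H : List ℕ}

theorem nil : IsShadow G s u σ [] [] :=
  ⟨rfl, ⟨List.nodup_nil, nofun, nofun⟩, nofun, rfl, Finset.subset_insert _ _⟩

theorem toFinset_subset (hS : IsShadow G s u σ h H) : H.toFinset ⊆ insert u h.toFinset := by
  rw [← picked_L_union_picked_R s H, ← picked_L_union_picked_R s h, hS.picked_R,
    ← Finset.insert_union]
  exact Finset.union_subset_union hS.picked_L subset_rfl

theorem mem_picked_L (hS : IsShadow G s u σ h H) {x : ℕ} (hx : x ∈ h) (hxH : x ∉ H) :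
    x ∈ picked s .L h := by
  have hx' := List.mem_toFinset.2 hx
  rw [← picked_L_union_picked_R] at hx'
  refine (Finset.mem_union.1 hx').resolve_right fun hxR => hxH ?_
  rw [← hS.picked_R] at hxR
  exact List.mem_toFinset.1 (picked_subset_toFinset hxR)

theorem ended_subL (hS : IsShadow G s u σ h H) (hu : u ∉ h) (hE : ended G s H) :
    ended (subL G u) s h :=
  hE.imp (fun hL => fills_subL_EL hL hS.picked_L) fun hR =>
    fills_subL_ER (hS.picked_R ▸ hR) fun hu' =>
      hu (List.mem_toFinset.1 (picked_subset_toFinset hu'))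

theorem append_singleton (hS : IsShadow G s u σ h H) (hne : ¬ ended G s H) {x : ℕ}
    (hxV : x ∈ G.V) (hxH : x ∉ H)
    (hL : mover s h.length = .L → x = σ H ∧ x ∈ insert u (insert a (picked s .L h)))
    (hR : mover s h.length = .R → x = a) :
    IsShadow G s u σ (h ++ [a]) (H ++ [x]) := by
  have hlen := hS.length_eq
  refine ⟨by simp [hlen], validHist_append_singleton_iff.2 ⟨hS.valid, hne, hxH, hxV⟩,
    follows_append_singleton_iff.2 ⟨hS.follows, fun hm => (hL (hlen ▸ hm)).1⟩, ?_, ?_⟩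
  · rw [picked_append_singleton, picked_append_singleton, hlen, hS.picked_R]
    split_ifs with hm
    · rw [hR hm]
    · rfl
  · rw [picked_append_singleton, picked_append_singleton, hlen]
    split_ifs with hm
    · exact Finset.insert_subset (hL hm).2
        (hS.picked_L.trans (Finset.insert_subset_insert u (Finset.subset_insert a _)))
    · exact hS.picked_L

theorem shadow_move_mem (hS : IsShadow G s u σ h (shadow s σ h))
    (hxV : σ (shadow s σ h) ∈ G.V) (hxH : σ (shadow s σ h) ∉ shadow s σ h) :
    σ (shadow s σ h) ∈
      insert u (insert (shadowStrategy s σ (G.V.erase u) h) (picked s .L h)) := by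
  set x := σ (shadow s σ h)
  by_cases hxu : x = u
  · exact hxu ▸ Finset.mem_insert_self _ _
  refine Finset.mem_insert_of_mem ?_
  by_cases hxh : x ∈ h
  · exact Finset.mem_insert_of_mem (hS.mem_picked_L hxh hxH)
  · have hplay : shadowStrategy s σ (G.V.erase u) h = x :=
      if_pos ⟨Finset.mem_erase.2 ⟨hxu, hxV⟩, hxh⟩
    exact hplay ▸ Finset.mem_insert_self _ _

end IsShadow

theorem isShadow_shadow (hσ : Legal G s .L σ) (hv : ValidHist (subL G u) s h)
    (hf : Follows s .L (shadowStrategy s σ (G.V.erase u)) h) :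
    IsShadow G s u σ h (shadow s σ h) := by
  induction h using List.reverseRecOn with
  | nil => exact IsShadow.nil
  | append_singleton h a ih =>
    obtain ⟨hv', hne, hah, haV⟩ := validHist_append_singleton_iff.1 hv
    obtain ⟨hf', ha⟩ := follows_append_singleton_iff.1 hf
    have hS := ih hv' hf'
    have huh : u ∉ h := fun hu => Finset.notMem_erase u G.V (hv'.2.1 u hu)
    have hHne : ¬ ended G s (shadow s σ h) := fun hE => hne (hS.ended_subL huh hE)
    obtain ⟨hau, haV⟩ := Finset.mem_erase.1 haV
    rw [shadow_append_singleton, shadowStep, hS.length_eq]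
    cases hm : mover s h.length
    · have hlen : (shadow s σ h).length < G.V.card := by
        have hle := hv.length_le
        rw [List.length_append, List.length_singleton] at hle
        rw [length_shadow]
        exact lt_of_lt_of_le hle Finset.card_erase_le
      obtain ⟨hxV, hxH⟩ := hσ _ hS.valid hS.follows hHne hlen (hS.length_eq ▸ hm)
      rw [if_pos rfl]
      exact hS.append_singleton hHne hxV hxH
        (fun _ => ⟨rfl, ha hm ▸ hS.shadow_move_mem hxV hxH⟩) (by simp [hm])
    · have haH : a ∉ shadow s σ h := fun haH => by
        rcases Finset.mem_insert.1 (hS.toFinset_subset (List.mem_toFinset.2 haH)) with rfl | hah'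
        exacts [hau rfl, hah (List.mem_toFinset.1 hah')]
      rw [if_neg nofun]
      exact hS.append_singleton hHne haV haH (by simp [hm]) fun _ => rfl

theorem winsAs_subL (G : Game) (s : Player) (u : ℕ) (hwin : WinsAs G s .L) :
    WinsAs (subL G u) s .L := by
  obtain ⟨σ, hσ, hwin⟩ := hwin
  refine ⟨shadowStrategy s σ (G.V.erase u), legal_shadowStrategy _ _ _ _, fun h hv hf hc => ?_⟩
  have hS := isShadow_shadow hσ hv hf
  by_cases hHc : Complete G s (shadow s σ h)
  · exact fills_subL_EL (hwin _ hS.valid hS.follows hHc) hS.picked_L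
  have hHne : ¬ ended G s (shadow s σ h) := fun hE => hHc (Or.inl hE)
  have hHlt : (shadow s σ h).length < G.V.card :=
    lt_of_le_of_ne hS.valid.length_le fun hfull => hHc (Or.inr hfull)
  rcases hc with (hL | hR) | hfull
  · exact hL
  · exact absurd (Or.inr (hS.picked_R ▸ fills_of_fills_subL_ER hR)) hHne
  -- the real board is full: one more move completes the shadow play
  obtain ⟨x, hxV, hxH, hv', hf'⟩ := hσ.exists_append_singleton hS.valid hS.follows hHne hHlt
  have hx : x ∈ insert u (picked s .L h) := by
    by_cases hxu : x = u
    · exact hxu ▸ Finset.mem_insert_self _ _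
    have hxh : x ∈ h := List.mem_toFinset.1 <|
      hv.toFinset_eq_of_length_eq hfull ▸ Finset.mem_erase.2 ⟨hxu, hxV⟩
    exact Finset.mem_insert_of_mem (hS.mem_picked_L hxh hxH)
  have hcomplete : (shadow s σ h ++ [x]).length = G.V.card := by
    have hcard := Finset.pred_card_le_card_erase (s := G.V) (a := u)
    rw [hS.length_eq, hfull] at hHlt
    rw [List.length_append, List.length_singleton, hS.length_eq, hfull]
    exact le_antisymm hHlt (Nat.sub_le_iff_le_add.1 hcard)
  refine fills_subL_EL (hwin _ hv' hf' (Or.inr hcomplete)) ?_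
  exact picked_append_singleton_subset.trans (Finset.insert_subset hx hS.picked_L)

theorem nonLosingAs_subL (G : Game) (s : Player) (u : ℕ) (hnl : NonLosingAs G s .L) :
    NonLosingAs (subL G u) s .L := by
  obtain ⟨σ, hσ, hnl⟩ := hnl
  refine ⟨shadowStrategy s σ (G.V.erase u), legal_shadowStrategy _ _ _ _,
    fun h hv hf _ hR => ?_⟩
  have hS := isShadow_shadow hσ hv hf
  have hR' : fills G.ER (picked s .R (shadow s σ h)) := hS.picked_R ▸ fills_of_fills_subL_ER hR
  exact hnl _ hS.valid hS.follows (Or.inl (Or.inr hR')) hR'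

end

theorem updated_game_second_player_general (G : Game) (u : ℕ) :
    (WinsAs G .R .L → WinsAs (subL G u) .R .L) ∧
    (NonLosingAs G .R .L → NonLosingAs (subL G u) .R .L) :=
  ⟨winsAs_subL G .R u, nonLosingAs_subL G .R u⟩

/-- If Left has a winning (resp. non-losing) strategy as second player on `G`,
then Left has a winning (resp. non-losing) strategy as second player on `G_u`. -/
theorem updated_game_second_player (G : Game) (hG : WellFormed G) (u : ℕ)
    (hu : u ∈ G.V) (hu' : ({u} : Finset ℕ) ∉ G.EL) :
    (WinsAs G .R .L → WinsAs (subL G u) .R .L) ∧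
    (NonLosingAs G .R .L → NonLosingAs (subL G u) .R .L) :=
  updated_game_second_player_general G u

end APG
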